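/- The commutative ring $R_\Theta := \mathbb{Z}[X_1,X_2]/(X_1^2X_2 + X_1X_2^2,\; X_1^2 + X_2^2 + X_1X_2)$ is a free $\mathbb{Z}$-module of rank 6; the residue classes of the monomials $1,\, X_1,\, X_2,\, X_1^2,\, X_1X_2,\, X_1^2X_2$ form a $\mathbb{Z}$-basis. -/

import Mathlib

/-!
Since `X₁ (X₁² + X₂² + X₁X₂) - (X₁²X₂ + X₁X₂²) = X₁³`, the defining ideal is
`(X₁³, X₂² + X₁X₂ + X₁²)`, so `R_Θ ≅ (ℤ[ε]/(ε³))[Y]/(Y² + εY + ε²)`: a tower of two extensions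
by monic polynomials, free with bases `1, ε, ε²` and `1, Y`. The products `X₁^i X₂^j`
(`i < 3`, `j < 2`) form the basis.
-/

open MvPolynomial

noncomputable section

/-- The defining ideal of the graph ring of the planar theta graph. -/
abbrev thetaIdeal : Ideal (MvPolynomial (Fin 2) ℤ) :=
  Ideal.span {X 0 ^ 2 * X 1 + X 0 * X 1 ^ 2, X 0 ^ 2 + X 1 ^ 2 + X 0 * X 1}

/-- The graph ring `R_Θ = ℤ[X₁,X₂]/(X₁²X₂ + X₁X₂², X₁² + X₂² + X₁X₂)` of the
planar theta graph. -/
abbrev RTheta := MvPolynomial (Fin 2) ℤ ⧸ thetaIdeal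


namespace AdjoinRoot

variable {R S : Type*} [CommRing R] [Semiring S] {f : Polynomial R}

theorem ringHom_ext_of_root {φ ψ : AdjoinRoot f →+* S} (hof : φ.comp (of f) = ψ.comp (of f))
    (hroot : φ (root f) = ψ (root f)) : φ = ψ :=
  Ideal.Quotient.ringHom_ext (Polynomial.ringHom_ext (RingHom.congr_fun hof) hroot)

def powerBasisFin (hf : f.Monic) {n : ℕ} (hn : f.natDegree = n) :
    Module.Basis (Fin n) R (AdjoinRoot f) :=
  (powerBasis' hf).basis.reindex (finCongr hn)

theorem powerBasisFin_apply (hf : f.Monic) {n : ℕ} (hn : f.natDegree = n) (i : Fin n) :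
    powerBasisFin hf hn i = root f ^ (i : ℕ) := by
  rw [powerBasisFin, Module.Basis.reindex_apply, PowerBasis.basis_eq_pow]
  rfl

end AdjoinRoot

section Quadratic

variable {A : Type*} [CommRing A] (a : A)

def sqAddMulAddSq : Polynomial A :=
  Polynomial.X ^ 2 + Polynomial.C a * Polynomial.X + Polynomial.C (a ^ 2)

theorem sqAddMulAddSq_natDegree [Nontrivial A] : (sqAddMulAddSq a).natDegree = 2 := by
  unfold sqAddMulAddSq; compute_degree!

theorem sqAddMulAddSq_monic : (sqAddMulAddSq a).Monic := by
  unfold sqAddMulAddSq; monicity!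

theorem root_sqAddMulAddSq :
    AdjoinRoot.root (sqAddMulAddSq a) ^ 2
      + AdjoinRoot.of (sqAddMulAddSq a) a * AdjoinRoot.root (sqAddMulAddSq a)
      + AdjoinRoot.of (sqAddMulAddSq a) a ^ 2 = 0 := by
  have h : AdjoinRoot.mk (sqAddMulAddSq a)
      (Polynomial.X ^ 2 + Polynomial.C a * Polynomial.X + Polynomial.C (a ^ 2)) = 0 :=
    AdjoinRoot.mk_self
  simpa only [map_add, map_mul, map_pow, AdjoinRoot.mk_X, AdjoinRoot.mk_C] using h

end Quadratic

abbrev TruncCube := AdjoinRoot (Polynomial.X ^ 3 : Polynomial ℤ)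

local notation "ε" => (AdjoinRoot.root (Polynomial.X ^ 3 : Polynomial ℤ) : TruncCube)

instance : Nontrivial TruncCube :=
  AdjoinRoot.nontrivial _ (by simp)

abbrev ThetaTower := AdjoinRoot (sqAddMulAddSq ε)

namespace ThetaTower

def x : ThetaTower := AdjoinRoot.of (sqAddMulAddSq ε) ε

def y : ThetaTower := AdjoinRoot.root (sqAddMulAddSq ε)

theorem x_pow_three : x ^ 3 = 0 := by
  have h := AdjoinRoot.eval₂_root (Polynomial.X ^ 3 : Polynomial ℤ)
  rw [Polynomial.eval₂_X_pow] at h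
  rw [x, ← map_pow, h, map_zero]

theorem y_sq_add_x_mul_y_add_x_sq : y ^ 2 + x * y + x ^ 2 = 0 :=
  root_sqAddMulAddSq ε

end ThetaTower

namespace RTheta

def x : RTheta := Ideal.Quotient.mk thetaIdeal (X 0)

def y : RTheta := Ideal.Quotient.mk thetaIdeal (X 1)

theorem x_sq_mul_y_add_x_mul_y_sq : x ^ 2 * y + x * y ^ 2 = 0 := by
  rw [x, y, ← map_pow, ← map_pow, ← map_mul, ← map_mul, ← map_add,
    Ideal.Quotient.eq_zero_iff_mem]
  exact Ideal.subset_span (Set.mem_insert _ _)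

theorem x_sq_add_y_sq_add_x_mul_y : x ^ 2 + y ^ 2 + x * y = 0 := by
  rw [x, y, ← map_pow, ← map_pow, ← map_mul, ← map_add, ← map_add,
    Ideal.Quotient.eq_zero_iff_mem]
  exact Ideal.subset_span (Set.mem_insert_of_mem _ rfl)

theorem x_pow_three : x ^ 3 = 0 := by
  linear_combination x * x_sq_add_y_sq_add_x_mul_y - x_sq_mul_y_add_x_mul_y_sq

theorem thetaIdeal_le_ker_eval₂Hom :
    thetaIdeal ≤ RingHom.ker (eval₂Hom (Int.castRingHom _) ![ThetaTower.x, ThetaTower.y]) := by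
  rw [Ideal.span_le, Set.pair_subset_iff]
  simp only [SetLike.mem_coe, RingHom.mem_ker, map_add, map_mul, map_pow, eval₂Hom_X',
    Matrix.cons_val_zero, Matrix.cons_val_one]
  constructor
  · linear_combination ThetaTower.x * ThetaTower.y_sq_add_x_mul_y_add_x_sq - ThetaTower.x_pow_three
  · linear_combination ThetaTower.y_sq_add_x_mul_y_add_x_sq

def toTower : RTheta →+* ThetaTower :=
  Ideal.Quotient.lift thetaIdeal _ fun _ hp => RingHom.mem_ker.mp (thetaIdeal_le_ker_eval₂Hom hp)

def ofTower : ThetaTower →+* RTheta :=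
  AdjoinRoot.lift
    (AdjoinRoot.lift (Int.castRingHom _) x (by rw [Polynomial.eval₂_X_pow]; exact x_pow_three))
    y <| by
      rw [sqAddMulAddSq, Polynomial.eval₂_add, Polynomial.eval₂_add, Polynomial.eval₂_mul,
        Polynomial.eval₂_X_pow, Polynomial.eval₂_C, Polynomial.eval₂_X, Polynomial.eval₂_C,
        map_pow, AdjoinRoot.lift_root]
      linear_combination x_sq_add_y_sq_add_x_mul_y

theorem toTower_x : toTower x = ThetaTower.x := by
  rw [toTower, x, Ideal.Quotient.lift_mk, eval₂Hom_X']
  rfl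

theorem toTower_y : toTower y = ThetaTower.y := by
  rw [toTower, y, Ideal.Quotient.lift_mk, eval₂Hom_X']
  rfl

theorem ofTower_x : ofTower ThetaTower.x = x := by
  rw [ofTower, ThetaTower.x, AdjoinRoot.lift_of, AdjoinRoot.lift_root]

theorem ofTower_y : ofTower ThetaTower.y = y := by
  rw [ofTower, ThetaTower.y, AdjoinRoot.lift_root]

def equivTower : RTheta ≃+* ThetaTower :=
  RingEquiv.ofRingHom toTower ofTower
    (AdjoinRoot.ringHom_ext_of_root
      (AdjoinRoot.ringHom_ext_of_root (RingHom.ext_int _ _)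
        (congr(toTower $ofTower_x).trans toTower_x))
      (congr(toTower $ofTower_y).trans toTower_y))
    (Ideal.Quotient.ringHom_ext (MvPolynomial.ringHom_ext (fun _ => by simp) fun i => by
      fin_cases i
      · exact congr(ofTower $toTower_x).trans ofTower_x
      · exact congr(ofTower $toTower_y).trans ofTower_y))

theorem equivTower_symm_x_pow_smul_y_pow (i j : ℕ) :
    equivTower.symm (ε ^ i • ThetaTower.y ^ j) = x ^ i * y ^ j := by
  rw [equivTower, RingEquiv.ofRingHom_symm, RingEquiv.ofRingHom_apply, Algebra.smul_def,
    AdjoinRoot.algebraMap_eq, map_pow, map_mul, map_pow, map_pow]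
  exact congr($ofTower_x ^ i * $ofTower_y ^ j)

def towerBasis : Module.Basis (Fin 3 × Fin 2) ℤ ThetaTower :=
  (AdjoinRoot.powerBasisFin (Polynomial.monic_X_pow 3) (Polynomial.natDegree_X_pow 3)).smulTower
    (AdjoinRoot.powerBasisFin (sqAddMulAddSq_monic _) (sqAddMulAddSq_natDegree _))

def monomialBasis : Module.Basis (Fin 3 × Fin 2) ℤ RTheta :=
  towerBasis.map equivTower.symm.toAddEquiv.toIntLinearEquiv

theorem monomialBasis_apply (i : Fin 3) (j : Fin 2) :
    monomialBasis (i, j) = x ^ (i : ℕ) * y ^ (j : ℕ) := by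
  rw [monomialBasis, Module.Basis.map_apply, towerBasis, Module.Basis.smulTower_apply,
    AdjoinRoot.powerBasisFin_apply, AdjoinRoot.powerBasisFin_apply]
  exact equivTower_symm_x_pow_smul_y_pow i j

/-- `(i, j) ↦` the position of `x ^ i * y ^ j` in the list `1, x, y, x², xy, x²y`. -/
def degLexIndex : Fin 3 × Fin 2 ≃ Fin 6 :=
  Equiv.ofBijective (fun p => ![![0, 2], ![1, 4], ![3, 5]] p.1 p.2) (by decide)

end RTheta

theorem RTheta_free_rank_six :
    Module.Free ℤ RTheta ∧ Module.rank ℤ RTheta = 6 ∧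
    ∃ B : Module.Basis (Fin 6) ℤ RTheta, ∀ i : Fin 6,
      B i = Ideal.Quotient.mk thetaIdeal
        (![1, X 0, X 1, X 0 ^ 2, X 0 * X 1, X 0 ^ 2 * X 1] i) := by
  let B := RTheta.monomialBasis.reindex RTheta.degLexIndex
  refine ⟨.of_basis B, by rw [rank_eq_card_basis B]; simp, B, fun k => ?_⟩
  obtain ⟨⟨i, j⟩, rfl⟩ := RTheta.degLexIndex.surjective k
  rw [Module.Basis.reindex_apply, Equiv.symm_apply_apply, RTheta.monomialBasis_apply]
  fin_cases i <;> fin_cases j <;> simp [RTheta.degLexIndex, RTheta.x, RTheta.y]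

end
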